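/- arXiv:1611.07105 — 4 statements merged into one kernel-verified Lean document; each statement's English description precedes it below -/
import Mathlib

section
/- Let F be a social choice correspondence on profiles of linear orders over a finite set A with |A| ≥ 3, and suppose F is manipulable by an optimist: there exist a voter i, profiles P = (P_i, P_{−i}) and P' = (P_i', P_{−i}) with F(P) = X, F(P') = Y, and best(P_i, Y) ≻_i best(P_i, X). Then for every family of probability functions p_i assigning each nonempty set W a distribution on W with p_i(best(P_i,W)) > 0 and p_i(worst(P_i,W)) > 0, there exists a utility function u_i : A → ℝ consistent with P_i (u_i(a) > u_i(b) whenever a ≻_i b) such that the expected utility of F(P') under p_i exceeds that of F(P). -/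
/-!
Start from a bounded strictly increasing utility and add a large constant `M` to every
alternative strictly above `b = best(P_i, F(P))`, in particular to `c = best(P_i, F(P'))`.
All of `F(P)` lies weakly below `b`, so its expected utility does not depend on `M`, while that
of `F(P')` is at least `p(c) · M` because `c` has positive probability.
-/

/-- The best element of a nonempty finite set under a ballot (a linear order given
as data). -/
def best {A : Type*} (L : LinearOrder A) (W : Finset A) (h : W.Nonempty) : A :=
  @Finset.max' A L W h

/-- The worst element of a nonempty finite set under a ballot. -/
def worst {A : Type*} (L : LinearOrder A) (W : Finset A) (h : W.Nonempty) : A :=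
  @Finset.min' A L W h

/-- Strict preference under a ballot: `prefLt L a b` means b ≻ a. -/
def prefLt {A : Type*} (L : LinearOrder A) (a b : A) : Prop := L.lt a b

section

variable {A : Type*} [LinearOrder A] [Fintype A]

theorem exists_strictMono_nonneg_le_card :
    ∃ f : A → ℝ, StrictMono f ∧ ∀ x, 0 ≤ f x ∧ f x ≤ Fintype.card A := by
  let e := (Fintype.orderIsoFinOfCardEq A rfl).symm
  refine ⟨fun x => ((e x : ℕ) : ℝ), fun x y hxy => ?_, fun x => ⟨by positivity, ?_⟩⟩
  · exact (Nat.cast_lt (α := ℝ)).2 (e.strictMono hxy)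
  · exact (Nat.cast_le (α := ℝ)).2 (e x).isLt.le

theorem exists_strictMono_weightedSum_lt (X Y : Finset A) (w v : A → ℝ)
    (hw : ∀ x ∈ X, 0 ≤ w x) (hv : ∀ y ∈ Y, 0 ≤ v y) {b c : A}
    (hXb : ∀ x ∈ X, x ≤ b) (hbc : b < c) (hcY : c ∈ Y) (hvc : 0 < v c) :
    ∃ u : A → ℝ, StrictMono u ∧ ∑ x ∈ X, w x * u x < ∑ y ∈ Y, v y * u y := by
  obtain ⟨f, hf, hf_bound⟩ := exists_strictMono_nonneg_le_card (A := A)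
  set N : ℝ := (Fintype.card A : ℝ)
  set M : ℝ := (N * ∑ x ∈ X, w x + 1) / v c
  have hM : 0 ≤ M := by
    have := Finset.sum_nonneg hw
    positivity
  let u : A → ℝ := fun x => f x + if b < x then M else 0
  have hstep : Monotone fun x => if b < x then M else 0 := fun x y hxy => by
    dsimp only
    split_ifs with hx hy
    exacts [le_rfl, absurd (hx.trans_le hxy) hy, hM, le_rfl]
  have hu_nonneg : ∀ x, 0 ≤ u x := fun x => add_nonneg (hf_bound x).1 (by split_ifs <;> simp [hM])
  refine ⟨u, hf.add_monotone hstep, ?_⟩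
  calc ∑ x ∈ X, w x * u x ≤ ∑ x ∈ X, w x * N := by
        refine Finset.sum_le_sum fun x hx => mul_le_mul_of_nonneg_left ?_ (hw x hx)
        simp only [u, if_neg (hXb x hx).not_gt, add_zero]
        exact (hf_bound x).2
    _ < v c * M := by
        rw [← Finset.sum_mul, mul_div_cancel₀ _ hvc.ne']
        linarith
    _ ≤ v c * u c := by
        gcongr
        simp only [u, if_pos hbc]
        linarith [(hf_bound c).1]
    _ ≤ ∑ y ∈ Y, v y * u y :=
        Finset.single_le_sum (fun y hy => mul_nonneg (hv y hy) (hu_nonneg y)) hcY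

end

theorem stmt_8_general {V A : Type*} [Fintype A]
    (F : (V → LinearOrder A) → Finset A) (hF : ∀ P, (F P).Nonempty)
    (i : V) (P P' : V → LinearOrder A)
    (hman : prefLt (P i) (best (P i) (F P) (hF P)) (best (P i) (F P') (hF P')))
    (p : Finset A → A → ℝ)
    (hp0 : ∀ W, ∀ x ∈ W, 0 ≤ p W x)
    (hpbest : ∀ (W : Finset A) (h : W.Nonempty), 0 < p W (best (P i) W h)) :
    ∃ u : A → ℝ, (∀ a b : A, prefLt (P i) b a → u b < u a) ∧
      ∑ x ∈ F P, p (F P) x * u x < ∑ y ∈ F P', p (F P') y * u y := by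
  let _ : LinearOrder A := P i
  obtain ⟨u, hu, hlt⟩ := exists_strictMono_weightedSum_lt (F P) (F P') (p (F P)) (p (F P'))
    (hp0 _) (hp0 _) (fun x hx => Finset.le_max' _ x hx) hman (Finset.max'_mem _ (hF P'))
    (hpbest _ (hF P'))
  exact ⟨u, fun _ _ h => hu h, hlt⟩

/-- If F is manipulable by an optimist at voter i (best(P_i, F(P')) ≻_i best(P_i, F(P))),
then for every probability function assigning each nonempty set a distribution with
positive probability on its best and worst elements under P_i, there is a utility
function consistent with P_i under which the expected utility of F(P') exceeds that
of F(P). -/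
theorem stmt_8 {V A : Type*} [Fintype V] [Fintype A] [DecidableEq A]
    (hA : 3 ≤ Fintype.card A)
    (F : (V → LinearOrder A) → Finset A) (hF : ∀ P, (F P).Nonempty)
    (i : V) (P P' : V → LinearOrder A)
    (hagree : ∀ j, j ≠ i → P j = P' j)
    (hman : prefLt (P i) (best (P i) (F P) (hF P)) (best (P i) (F P') (hF P')))
    (p : Finset A → A → ℝ)
    (hp0 : ∀ W, ∀ x ∈ W, 0 ≤ p W x)
    (hp1 : ∀ W : Finset A, W.Nonempty → ∑ x ∈ W, p W x = 1)
    (hpbest : ∀ (W : Finset A) (h : W.Nonempty), 0 < p W (best (P i) W h))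
    (hpworst : ∀ (W : Finset A) (h : W.Nonempty), 0 < p W (worst (P i) W h)) :
    ∃ u : A → ℝ, (∀ a b : A, prefLt (P i) b a → u b < u a) ∧
      ∑ x ∈ F P, p (F P) x * u x < ∑ y ∈ F P', p (F P') y * u y :=
  stmt_8_general F hF i P P' hman p hp0 hpbest
end

section
/- Let F be a social choice correspondence on profiles of linear orders over a finite set A, and suppose F is manipulable by a pessimist: there exist a voter i, profiles P = (P_i, P_{−i}) and P' = (P_i', P_{−i}) with F(P) = X, F(P') = Y, and worst(P_i, Y) ≻_i worst(P_i, X). Then for every probability function p_i assigning to each nonempty W ⊆ A a distribution on W with positive probability on best(P_i,W) and worst(P_i,W), there exists a utility function u_i consistent with P_i such that ∑_{y∈Y} p_i(y)·u_i(y) > ∑_{x∈X} p_i(x)·u_i(x). -/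
open Finset

section ThresholdPenalty

variable {A : Type*} [LinearOrder A]

theorem StrictMono.sub_ite_lt {u : A → ℝ} (hu : StrictMono u) (t : A) {M : ℝ} (hM : 0 ≤ M) :
    StrictMono fun a => u a - if a < t then M else 0 := by
  intro a b hab
  have := hu hab
  by_cases hb : b < t
  · simp only [hb, hab.trans hb, if_true]
    linarith
  · by_cases ha : a < t <;> simp only [ha, hb, if_true, if_false] <;> linarith

theorem sum_mul_sub_ite_lt_of_le (Y : Finset A) (q u : A → ℝ) {t : A} (M : ℝ)
    (hY : ∀ y ∈ Y, t ≤ y) :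
    ∑ y ∈ Y, q y * (u y - if y < t then M else 0) = ∑ y ∈ Y, q y * u y :=
  sum_congr rfl fun y hy => by simp [not_lt.mpr (hY y hy)]

theorem sum_mul_sub_ite_lt_le {X : Finset A} {p : A → ℝ} (u : A → ℝ) {w t : A} {M : ℝ}
    (hp : ∀ x ∈ X, 0 ≤ p x) (hw : w ∈ X) (hwt : w < t) (hM : 0 ≤ M) :
    ∑ x ∈ X, p x * (u x - if x < t then M else 0) ≤ ∑ x ∈ X, p x * u x - p w * M := by
  have hpenalty : p w * M ≤ ∑ x ∈ X, p x * (if x < t then M else 0) := by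
    have hterm : p w * M = p w * (if w < t then M else 0) := by rw [if_pos hwt]
    rw [hterm]
    refine single_le_sum (f := fun x => p x * (if x < t then M else 0)) (fun x hx => ?_) hw
    exact mul_nonneg (hp x hx) (by split_ifs <;> simp [hM])
  simp only [mul_sub, sum_sub_distrib]
  linarith

theorem exists_strictMono_sum_mul_lt [Countable A] {X Y : Finset A} {p q : A → ℝ} {w t : A}
    (hp : ∀ x ∈ X, 0 ≤ p x) (hw : w ∈ X) (hpw : 0 < p w) (hwt : w < t)
    (hY : ∀ y ∈ Y, t ≤ y) :
    ∃ u : A → ℝ, StrictMono u ∧ ∑ x ∈ X, p x * u x < ∑ y ∈ Y, q y * u y := by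
  obtain ⟨e⟩ := Order.embedding_from_countable_to_dense (α := A) (β := ℝ)
  set S₁ := ∑ x ∈ X, p x * e x
  set S₂ := ∑ y ∈ Y, q y * e y
  set M := |S₁ - S₂| / p w + 1
  have hM : 0 ≤ M := by positivity
  have hMw : S₁ - S₂ < p w * M := by
    have : p w * M = |S₁ - S₂| + p w := by
      rw [mul_add, mul_div_cancel₀ _ hpw.ne', mul_one]
    linarith [le_abs_self (S₁ - S₂)]
  refine ⟨fun a => e a - if a < t then M else 0, e.strictMono.sub_ite_lt t hM, ?_⟩
  rw [sum_mul_sub_ite_lt_of_le Y q e M hY]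
  linarith [sum_mul_sub_ite_lt_le e hp hw hwt hM]

end ThresholdPenalty

theorem stmt_9_general {V A : Type*} [Fintype A]
    (F : (V → LinearOrder A) → Finset A) (hF : ∀ P, (F P).Nonempty)
    (i : V) (P P' : V → LinearOrder A)
    (hman : prefLt (P i) (worst (P i) (F P) (hF P)) (worst (P i) (F P') (hF P')))
    (p : Finset A → A → ℝ)
    (hp0 : ∀ W, ∀ x ∈ W, 0 ≤ p W x)
    (hpworst : ∀ (W : Finset A) (h : W.Nonempty), 0 < p W (worst (P i) W h)) :
    ∃ u : A → ℝ, (∀ a b : A, prefLt (P i) b a → u b < u a) ∧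
      ∑ x ∈ F P, p (F P) x * u x < ∑ y ∈ F P', p (F P') y * u y := by
  let _ : LinearOrder A := P i
  obtain ⟨u, hu, hlt⟩ := exists_strictMono_sum_mul_lt (hp0 (F P)) (min'_mem _ (hF P))
    (hpworst (F P) (hF P)) hman (fun y hy => min'_le (F P') y hy)
  exact ⟨u, fun _ _ hba => hu hba, hlt⟩

/-- If F is manipulable by a pessimist at voter i (worst(P_i, F(P')) ≻_i worst(P_i, F(P))),
then for every probability function assigning each nonempty set a distribution with
positive probability on its best and worst elements under P_i, there is a utility
function consistent with P_i under which the expected utility of F(P') exceeds that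
of F(P). -/
theorem stmt_9 {V A : Type*} [Fintype V] [Fintype A] [DecidableEq A]
    (F : (V → LinearOrder A) → Finset A) (hF : ∀ P, (F P).Nonempty)
    (i : V) (P P' : V → LinearOrder A)
    (hagree : ∀ j, j ≠ i → P j = P' j)
    (hman : prefLt (P i) (worst (P i) (F P) (hF P)) (worst (P i) (F P') (hF P')))
    (p : Finset A → A → ℝ)
    (hp0 : ∀ W, ∀ x ∈ W, 0 ≤ p W x)
    (hp1 : ∀ W : Finset A, W.Nonempty → ∑ x ∈ W, p W x = 1)
    (hpbest : ∀ (W : Finset A) (h : W.Nonempty), 0 < p W (best (P i) W h))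
    (hpworst : ∀ (W : Finset A) (h : W.Nonempty), 0 < p W (worst (P i) W h)) :
    ∃ u : A → ℝ, (∀ a b : A, prefLt (P i) b a → u b < u a) ∧
      ∑ x ∈ F P, p (F P) x * u x < ∑ y ∈ F P', p (F P') y * u y :=
  stmt_9_general F hF i P P' hman p hp0 hpworst
end

section
/- Let F be a social choice correspondence over a finite set A. Define the half-half probability functions p_i that assign probability 1/2 each to best(P_i, W) and worst(P_i, W) when these differ, and probability 1 when they coincide. If F is strategy-proof for optimists and strategy-proof for pessimists, then no voter can profitably manipulate in expected utility under these p_i for any utility function consistent with their ballot. -/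
/-- Weak preference under a ballot. -/
def prefLe {A : Type*} (L : LinearOrder A) (a b : A) : Prop := L.le a b

/-- The half-half probability function: probability 1/2 each on the best and worst
elements of W under the ballot L when they differ, probability 1 when they coincide. -/
noncomputable def halfHalf {A : Type*} [DecidableEq A] (L : LinearOrder A)
    (W : Finset A) (h : W.Nonempty) (x : A) : ℝ :=
  if best L W h = worst L W h then (if x = best L W h then 1 else 0)
  else if x = best L W h ∨ x = worst L W h then 1 / 2 else 0

/-! Under the half-half lottery the expected utility of an outcome set is the average of the
utilities of its best and worst elements. The two strategy-proofness conditions say that a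
deviation can improve neither of these for the deviating voter, and a utility consistent with
the ballot is monotone in it, so neither term of the average can increase. -/

lemma sum_halfHalf_mul {A : Type*} [DecidableEq A] (L : LinearOrder A) (W : Finset A)
    (h : W.Nonempty) (u : A → ℝ) :
    ∑ x ∈ W, halfHalf L W h x * u x = (u (best L W h) + u (worst L W h)) / 2 := by
  have hb : best L W h ∈ W := @Finset.max'_mem A L W h
  have hw : worst L W h ∈ W := @Finset.min'_mem A L W h
  by_cases heq : best L W h = worst L W h
  · rw [Finset.sum_eq_single_of_mem _ hb fun x _ hx => by
      simp only [halfHalf, if_pos heq, if_neg hx, zero_mul]]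
    simp only [halfHalf, if_true, one_mul, ← heq]
    ring
  · rw [Finset.sum_eq_add_of_mem _ _ hb hw heq fun x _ hx => by simp [halfHalf, hx.1, hx.2]]
    simp only [halfHalf, if_neg heq, true_or, or_true, if_true]
    ring

lemma le_of_prefLe_of_strictMono {A : Type*} (L : LinearOrder A) {u : A → ℝ}
    (hu : ∀ a b : A, prefLt L b a → u b < u a) {a b : A} (hab : prefLe L a b) : u a ≤ u b :=
  letI := L
  (StrictMono.monotone fun x y hxy => hu y x hxy) hab

theorem stmt_10_general {V A : Type*} [DecidableEq A]
    (F : (V → LinearOrder A) → Finset A) (hF : ∀ P, (F P).Nonempty)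
    (SPO : ∀ (i : V) (P P' : V → LinearOrder A), (∀ j, j ≠ i → P j = P' j) →
      prefLe (P i) (best (P i) (F P') (hF P')) (best (P i) (F P) (hF P)))
    (SPP : ∀ (i : V) (P P' : V → LinearOrder A), (∀ j, j ≠ i → P j = P' j) →
      prefLe (P i) (worst (P i) (F P') (hF P')) (worst (P i) (F P) (hF P))) :
    ∀ (i : V) (P P' : V → LinearOrder A), (∀ j, j ≠ i → P j = P' j) →
      ∀ u : A → ℝ, (∀ a b : A, prefLt (P i) b a → u b < u a) →
        ∑ y ∈ F P', halfHalf (P i) (F P') (hF P') y * u y ≤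
          ∑ x ∈ F P, halfHalf (P i) (F P) (hF P) x * u x := by
  intro i P P' hP u hu
  rw [sum_halfHalf_mul, sum_halfHalf_mul]
  have hbest := le_of_prefLe_of_strictMono (P i) hu (SPO i P P' hP)
  have hworst := le_of_prefLe_of_strictMono (P i) hu (SPP i P P' hP)
  linarith

/-- If F is strategy-proof for optimists and for pessimists, then under the
half-half probability functions no voter can profitably manipulate in expected
utility, for any utility function consistent with their ballot. -/
theorem stmt_10 {V A : Type*} [Fintype V] [Fintype A] [DecidableEq A]
    (F : (V → LinearOrder A) → Finset A) (hF : ∀ P, (F P).Nonempty)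
    (SPO : ∀ (i : V) (P P' : V → LinearOrder A), (∀ j, j ≠ i → P j = P' j) →
      prefLe (P i) (best (P i) (F P') (hF P')) (best (P i) (F P) (hF P)))
    (SPP : ∀ (i : V) (P P' : V → LinearOrder A), (∀ j, j ≠ i → P j = P' j) →
      prefLe (P i) (worst (P i) (F P') (hF P')) (worst (P i) (F P) (hF P))) :
    ∀ (i : V) (P P' : V → LinearOrder A), (∀ j, j ≠ i → P j = P' j) →
      ∀ u : A → ℝ, (∀ a b : A, prefLt (P i) b a → u b < u a) →
        ∑ y ∈ F P', halfHalf (P i) (F P') (hF P') y * u y ≤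
          ∑ x ∈ F P, halfHalf (P i) (F P) (hF P) x * u x :=
  stmt_10_general F hF SPO SPP
end

section
/- A social choice correspondence F is manipulable in the sense of Taylor (by an optimist or a pessimist) if and only if for every family of probability functions p_i (assigning each set W a distribution supported with positive probability on its best and worst elements under P_i) there exists a voter i, a utility function u_i consistent with P_i, and profiles (P_i, P_{−i}), (P_i', P_{−i}) such that the expected utility of F(P_i' P_{−i}) strictly exceeds that of F(P_i P_{−i}). -/
/-!
A Taylor manipulation raises either the best or the worst element of the outcome under the
manipulator's ballot. Let `c` be the best element of `F P` in the optimist case, its worst element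
in the pessimist case. Since every admissible lottery charges the best and the worst elements, the
probability mass that `F P'` puts strictly above `c` exceeds that of `F P`. A utility that is the
indicator of "strictly above `c`" plus a small strictly increasing perturbation is consistent with
the ballot and turns this gap into a gain in expected utility.

Conversely, the lottery giving weight `1/2` to the best and to the worst element is admissible,
and under it expected utility is the average of the utilities of the best and worst elements;
this average can only rise if the best or the worst element rises.
-/

open Finset

theorem exists_strictMono_mem_Ioo_zero_one (A : Type*) [LinearOrder A] [Countable A] :
    ∃ r : A → ℝ, StrictMono r ∧ ∀ x, r x ∈ Set.Ioo 0 1 := by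
  have : Nontrivial (Set.Ioo (0 : ℝ) 1) :=
    ⟨⟨⟨1 / 3, by norm_num⟩, ⟨2 / 3, by norm_num⟩, by norm_num⟩⟩
  obtain ⟨f⟩ := Order.embedding_from_countable_to_dense (α := A) (β := Set.Ioo (0 : ℝ) 1)
  exact ⟨fun x => f x, fun _ _ h => f.strictMono h, fun x => (f x).2⟩

section ExpectedUtility

variable {A : Type*} [LinearOrder A]

theorem exists_strictMono_sum_mul_lt_of_sum_filter_lt [Countable A] {T T' : Finset A}
    {q q' : A → ℝ} (hq0 : ∀ x ∈ T, 0 ≤ q x) (hq1 : ∑ x ∈ T, q x = 1)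
    (hq'0 : ∀ y ∈ T', 0 ≤ q' y) (c : A)
    (hc : ∑ x ∈ T with c < x, q x < ∑ y ∈ T' with c < y, q' y) :
    ∃ u : A → ℝ, StrictMono u ∧ ∑ x ∈ T, q x * u x < ∑ y ∈ T', q' y * u y := by
  obtain ⟨r, hr, hr01⟩ := exists_strictMono_mem_Ioo_zero_one A
  -- The perturbation `δ * r` shifts each expectation by less than `δ`, half the gap.
  set δ := (∑ y ∈ T' with c < y, q' y - ∑ x ∈ T with c < x, q x) / 2 with hδdef
  have hδ : 0 < δ := by positivity
  set u : A → ℝ := fun x => (if c < x then 1 else 0) + δ * r x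
  have expand : ∀ (S : Finset A) (f : A → ℝ),
      ∑ x ∈ S, f x * u x = ∑ x ∈ S with c < x, f x + δ * ∑ x ∈ S, f x * r x := by
    intro S f
    simp only [u, mul_add, mul_ite, mul_one, mul_zero, sum_add_distrib, sum_filter, mul_sum,
      mul_left_comm]
  have hT : ∑ x ∈ T, q x * r x ≤ 1 :=
    calc ∑ x ∈ T, q x * r x ≤ ∑ x ∈ T, q x :=
          sum_le_sum fun x hx => mul_le_of_le_one_right (hq0 x hx) (hr01 x).2.le
      _ = 1 := hq1
  have hT' : 0 ≤ ∑ y ∈ T', q' y * r y :=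
    sum_nonneg fun y hy => mul_nonneg (hq'0 y hy) (hr01 y).1.le
  refine ⟨u, fun a b hab => ?_, ?_⟩
  · have step : (if c < a then (1 : ℝ) else 0) ≤ if c < b then 1 else 0 := by
      by_cases hb : c < b
      · rw [if_pos hb]
        split_ifs <;> norm_num
      · rw [if_neg hb, if_neg fun ha => hb (ha.trans hab)]
    have := mul_lt_mul_of_pos_left (hr hab) hδ
    simp only [u]
    linarith
  · rw [expand, expand]
    linarith [mul_le_of_le_one_right hδ.le hT, mul_nonneg hδ.le hT']

theorem sum_filter_gt_max'_lt_of_max'_lt {T T' : Finset A} (hT : T.Nonempty)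
    (hT' : T'.Nonempty) {q q' : A → ℝ} (hq'0 : ∀ y ∈ T', 0 ≤ q' y)
    (hpos : 0 < q' (T'.max' hT')) (hlt : T.max' hT < T'.max' hT') :
    ∑ x ∈ T with T.max' hT < x, q x < ∑ y ∈ T' with T.max' hT < y, q' y :=
  calc ∑ x ∈ T with T.max' hT < x, q x = 0 := by
        rw [filter_false_of_mem fun x hx => not_lt.2 (T.le_max' x hx), sum_empty]
    _ < q' (T'.max' hT') := hpos
    _ ≤ ∑ y ∈ T' with T.max' hT < y, q' y :=
        single_le_sum (fun y hy => hq'0 y (mem_filter.1 hy).1)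
          (mem_filter.2 ⟨T'.max'_mem hT', hlt⟩)

theorem sum_filter_gt_min'_lt_of_min'_lt {T T' : Finset A} (hT : T.Nonempty)
    (hT' : T'.Nonempty) {q q' : A → ℝ} (hq0 : ∀ x ∈ T, 0 ≤ q x) (hq1 : ∑ x ∈ T, q x = 1)
    (hq'1 : ∑ y ∈ T', q' y = 1) (hpos : 0 < q (T.min' hT)) (hlt : T.min' hT < T'.min' hT') :
    ∑ x ∈ T with T.min' hT < x, q x < ∑ y ∈ T' with T.min' hT < y, q' y :=
  calc ∑ x ∈ T with T.min' hT < x, q x ≤ ∑ x ∈ T.erase (T.min' hT), q x := by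
        refine sum_le_sum_of_subset_of_nonneg (fun x hx => ?_)
          fun x hx _ => hq0 x (mem_of_mem_erase hx)
        obtain ⟨hxT, hx⟩ := mem_filter.1 hx
        exact mem_erase.2 ⟨hx.ne', hxT⟩
    _ = 1 - q (T.min' hT) := by rw [sum_erase_eq_sub (T.min'_mem hT), hq1]
    _ < 1 := by linarith
    _ = ∑ y ∈ T' with T.min' hT < y, q' y := by
        rw [filter_true_of_mem fun y hy => hlt.trans_le (T'.min'_le y hy), hq'1]

theorem max'_lt_or_min'_lt_of_average_lt {T T' : Finset A} (hT : T.Nonempty)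
    (hT' : T'.Nonempty) {u : A → ℝ} (hu : Monotone u)
    (h : (u (T.max' hT) + u (T.min' hT)) / 2 < (u (T'.max' hT') + u (T'.min' hT')) / 2) :
    T.max' hT < T'.max' hT' ∨ T.min' hT < T'.min' hT' := by
  by_contra! hle
  linarith [hu hle.1, hu hle.2]

end ExpectedUtility

section BestWorstLottery

variable {A : Type*} [DecidableEq A] (L : LinearOrder A) (W : Finset A)

noncomputable def bestWorstLottery (x : A) : ℝ :=
  if h : W.Nonempty then
    ((if x = best L W h then 1 else 0) + (if x = worst L W h then 1 else 0)) / 2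
  else 0

theorem bestWorstLottery_nonneg (x : A) : 0 ≤ bestWorstLottery L W x := by
  unfold bestWorstLottery
  split_ifs <;> norm_num

theorem bestWorstLottery_best_pos (h : W.Nonempty) :
    0 < bestWorstLottery L W (best L W h) := by
  rw [bestWorstLottery, dif_pos h, if_pos rfl]
  split_ifs <;> norm_num

theorem bestWorstLottery_worst_pos (h : W.Nonempty) :
    0 < bestWorstLottery L W (worst L W h) := by
  rw [bestWorstLottery, dif_pos h, if_pos rfl]
  split_ifs <;> norm_num

theorem sum_bestWorstLottery_mul (h : W.Nonempty) (u : A → ℝ) :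
    ∑ x ∈ W, bestWorstLottery L W x * u x = (u (best L W h) + u (worst L W h)) / 2 := by
  have hb : best L W h ∈ W := @Finset.max'_mem A L W h
  have hw : worst L W h ∈ W := @Finset.min'_mem A L W h
  simp only [bestWorstLottery, dif_pos h, add_div, add_mul, ite_div, ite_mul, zero_div, zero_mul,
    sum_add_distrib, sum_ite_eq', hb, hw, if_true]
  ring

theorem sum_bestWorstLottery (h : W.Nonempty) : ∑ x ∈ W, bestWorstLottery L W x = 1 := by
  simpa using sum_bestWorstLottery_mul L W h 1

end BestWorstLottery

theorem stmt_11_general {V A : Type*} [Fintype A] [DecidableEq A]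
    (F : (V → LinearOrder A) → Finset A) (hF : ∀ P, (F P).Nonempty) :
    (∃ (i : V) (P P' : V → LinearOrder A), (∀ j, j ≠ i → P j = P' j) ∧
        (prefLt (P i) (best (P i) (F P) (hF P)) (best (P i) (F P') (hF P')) ∨
         prefLt (P i) (worst (P i) (F P) (hF P)) (worst (P i) (F P') (hF P')))) ↔
    (∀ p : V → (V → LinearOrder A) → Finset A → A → ℝ,
        (∀ i P W, ∀ x ∈ W, 0 ≤ p i P W x) →
        (∀ i P (W : Finset A), W.Nonempty → ∑ x ∈ W, p i P W x = 1) →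
        (∀ i P (W : Finset A) (h : W.Nonempty), 0 < p i P W (best (P i) W h)) →
        (∀ i P (W : Finset A) (h : W.Nonempty), 0 < p i P W (worst (P i) W h)) →
        ∃ (i : V) (P P' : V → LinearOrder A), (∀ j, j ≠ i → P j = P' j) ∧
          ∃ u : A → ℝ, (∀ a b : A, prefLt (P i) b a → u b < u a) ∧
            ∑ x ∈ F P, p i P (F P) x * u x < ∑ y ∈ F P', p i P (F P') y * u y) := by
  constructor
  · rintro ⟨i, P, P', hP, hman⟩ p hp0 hp1 hbest hworst
    -- Under this instance, `best (P i)`, `worst (P i)`, `prefLt (P i)` are `max'`, `min'`, `<`.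
    let := P i
    have gap : ∃ c, ∑ x ∈ F P with c < x, p i P (F P) x <
        ∑ y ∈ F P' with c < y, p i P (F P') y := by
      rcases hman with hopt | hpess
      · exact ⟨_, sum_filter_gt_max'_lt_of_max'_lt (hF P) (hF P') (hp0 i P _)
          (hbest i P _ (hF P')) hopt⟩
      · exact ⟨_, sum_filter_gt_min'_lt_of_min'_lt (hF P) (hF P') (hp0 i P _)
          (hp1 i P _ (hF P)) (hp1 i P _ (hF P')) (hworst i P _ (hF P)) hpess⟩
    obtain ⟨c, hc⟩ := gap
    obtain ⟨u, hu, hlt⟩ := exists_strictMono_sum_mul_lt_of_sum_filter_lt (hp0 i P _)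
      (hp1 i P _ (hF P)) (hp0 i P _) c hc
    exact ⟨i, P, P', hP, u, fun _ _ h => hu h, hlt⟩
  · intro h
    obtain ⟨i, P, P', hP, u, hu, hlt⟩ := h (fun i P => bestWorstLottery (P i))
      (fun i P W x _ => bestWorstLottery_nonneg (P i) W x)
      (fun i P => sum_bestWorstLottery (P i)) (fun i P => bestWorstLottery_best_pos (P i))
      (fun i P => bestWorstLottery_worst_pos (P i))
    rw [sum_bestWorstLottery_mul _ _ (hF P), sum_bestWorstLottery_mul _ _ (hF P')] at hlt
    let := P i
    have hmono : StrictMono u := fun a b h => hu b a h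
    exact ⟨i, P, P', hP, max'_lt_or_min'_lt_of_average_lt (hF P) (hF P') hmono.monotone hlt⟩

/-- A social choice correspondence F is manipulable in the sense of Taylor
(by an optimist or a pessimist) iff for every family of probability functions
(assigning, at each profile, to each nonempty set a distribution with positive
probability on its best and worst elements under the voter's ballot) there exist a
voter i, a utility function consistent with P_i, and profiles differing only in i's
ballot such that the expected utility of F(P') strictly exceeds that of F(P). -/
theorem stmt_11 {V A : Type*} [Fintype V] [Fintype A] [DecidableEq A]
    (hA : 3 ≤ Fintype.card A)
    (F : (V → LinearOrder A) → Finset A) (hF : ∀ P, (F P).Nonempty) :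
    (∃ (i : V) (P P' : V → LinearOrder A), (∀ j, j ≠ i → P j = P' j) ∧
        (prefLt (P i) (best (P i) (F P) (hF P)) (best (P i) (F P') (hF P')) ∨
         prefLt (P i) (worst (P i) (F P) (hF P)) (worst (P i) (F P') (hF P')))) ↔
    (∀ p : V → (V → LinearOrder A) → Finset A → A → ℝ,
        (∀ i P W, ∀ x ∈ W, 0 ≤ p i P W x) →
        (∀ i P (W : Finset A), W.Nonempty → ∑ x ∈ W, p i P W x = 1) →
        (∀ i P (W : Finset A) (h : W.Nonempty), 0 < p i P W (best (P i) W h)) →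
        (∀ i P (W : Finset A) (h : W.Nonempty), 0 < p i P W (worst (P i) W h)) →
        ∃ (i : V) (P P' : V → LinearOrder A), (∀ j, j ≠ i → P j = P' j) ∧
          ∃ u : A → ℝ, (∀ a b : A, prefLt (P i) b a → u b < u a) ∧
            ∑ x ∈ F P, p i P (F P) x * u x < ∑ y ∈ F P', p i P (F P') y * u y) :=
  stmt_11_general F hF
end
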